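/- Let G = (V,E) be a finite simple graph with at least one edge, and let SG be the set of 0/1 incidence vectors in R^E of edge subsets of G contained in a cut of G. Then the vanishing ideal I(SG) is TH_1-exact (i.e., TH_1(I(SG)) = conv(SG)) if and only if G is bipartite. -/

import Mathlib

open MvPolynomial

/-- `f` is `k`-sos mod `I`: there are polynomials `h_j` of total degree at most `k` with
`f - ∑ j, h_j ^ 2 ∈ I`. -/
def IsKSos {σ : Type*} (I : Ideal (MvPolynomial σ ℝ)) (k : ℕ) (f : MvPolynomial σ ℝ) :
    Prop :=
  ∃ (t : ℕ) (h : Fin t → MvPolynomial σ ℝ),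
    (∀ j, (h j).totalDegree ≤ k) ∧ f - ∑ j, h j ^ 2 ∈ I

/-- The `k`-th theta body of an ideal `I`: the set of points where every polynomial of
degree at most 1 that is `k`-sos mod `I` is nonnegative. -/
def thetaBody {σ : Type*} (I : Ideal (MvPolynomial σ ℝ)) (k : ℕ) : Set (σ → ℝ) :=
  {x | ∀ f : MvPolynomial σ ℝ, f.totalDegree ≤ 1 → IsKSos I k f → 0 ≤ eval x f}

/-- The set SG of 0/1 incidence vectors in `ℝ^E` of edge subsets of `G` that are contained
in a cut of `G` (a cut being the set of edges with exactly one endpoint in some `S ⊆ V`). -/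
def cutVectors {V : Type*} (G : SimpleGraph V) : Set (G.edgeSet → ℝ) :=
  {x | ∃ (F : Set G.edgeSet) (S : Set V),
    (∀ e ∈ F, ∀ a b : V, (e : Sym2 V) = s(a, b) →
      ((a ∈ S ∧ b ∉ S) ∨ (b ∈ S ∧ a ∉ S))) ∧
    x = F.indicator 1}

/-!
If `G` is bipartite with sides `A` and `Aᶜ`, the cut `δ(A)` is all of `E`, so `SG = {0,1}^E`.
Since `x_e - x_e²` and `(1 - x_e) - (1 - x_e)²` lie in `I(SG)`, `TH_1` lies in the cube
`[0,1]^E = conv SG`.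

Conversely, any two edges lie in a common cut, so `SG` contains every 0/1 vector with at most two
ones. If `f` is 1-sos mod `I(SG)`, then `f - ∑ h_j²` has degree at most 2 and vanishes at these
vectors, hence at every 0/1 vector (a polynomial's value at the indicator of `F` is the sum, over
`s ⊆ F`, of its coefficients on monomials with support `s`). So `TH_1` contains every 0/1 vector.
If `G` has an odd closed walk with edge set `W`, no cut contains `W`, so the inequality
`∑_{e ∈ W} x_e ≤ |W| - 1` holds on `SG` but fails at the indicator of `W`.
-/

open Finset

section ZeroOnePoints

variable {σ : Type*}

lemma Finsupp.card_support_le_sum (d : σ →₀ ℕ) : #d.support ≤ d.sum fun _ e => e := by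
  rw [card_eq_sum_ones, Finsupp.sum]
  exact Finset.sum_le_sum fun i hi => Nat.one_le_iff_ne_zero.2 (Finsupp.mem_support_iff.1 hi)

lemma eval_indicator_eq_sum_coeff [DecidableEq σ] (F : Finset σ) (p : MvPolynomial σ ℝ) :
    eval ((↑F : Set σ).indicator 1) p = ∑ d ∈ p.support with d.support ⊆ F, p.coeff d := by
  rw [eval_eq, sum_filter]
  refine sum_congr rfl fun d _ => ?_
  split_ifs with h
  · rw [prod_eq_one fun i hi => by simp [h hi], mul_one]
  · obtain ⟨i, hi, hiF⟩ := not_subset.1 h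
    rw [prod_eq_zero hi (by simp [hiF, Finsupp.mem_support_iff.1 hi]), mul_zero]

lemma eval_indicator_eq_sum_powerset [DecidableEq σ] (F : Finset σ) (p : MvPolynomial σ ℝ) :
    eval ((↑F : Set σ).indicator 1) p =
      ∑ s ∈ F.powerset, ∑ d ∈ p.support with d.support = s, p.coeff d := by
  rw [eval_indicator_eq_sum_coeff, ← sum_fiberwise_of_maps_to (g := Finsupp.support) (t := F.powerset)
    fun d hd => mem_powerset.2 (mem_filter.1 hd).2]
  refine sum_congr rfl fun s hs => ?_
  rw [filter_filter]
  refine sum_congr (filter_congr fun d _ => ?_) fun _ _ => rfl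
  exact ⟨fun h => h.2, fun h => ⟨h.trans_subset (mem_powerset.1 hs), h⟩⟩

lemma eval_indicator_eq_zero_of_totalDegree_le {p : MvPolynomial σ ℝ} {n : ℕ}
    (hp : p.totalDegree ≤ n)
    (h : ∀ F : Finset σ, #F ≤ n → eval ((↑F : Set σ).indicator 1) p = 0) (F : Finset σ) :
    eval ((↑F : Set σ).indicator 1) p = 0 := by
  classical
  set c : Finset σ → ℝ := fun s => ∑ d ∈ p.support with d.support = s, p.coeff d
  -- Möbius inversion of `eval_indicator_eq_sum_powerset`, by strong induction on `s`.
  have hc : ∀ s, c s = 0 := by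
    intro s
    induction s using strongInduction with
    | H s ih =>
      by_cases hs : #s ≤ n
      · have hs0 := h s hs
        rwa [eval_indicator_eq_sum_powerset, ← add_sum_erase _ _ (mem_powerset_self s),
          sum_eq_zero fun t ht => ih t ?_, add_zero] at hs0
        obtain ⟨hts, hst⟩ := mem_erase.1 ht
        exact ssubset_of_subset_of_ne (mem_powerset.1 hst) hts
      · refine sum_eq_zero fun d hd => absurd ?_ hs
        obtain ⟨hdp, rfl⟩ := mem_filter.1 hd
        exact (d.card_support_le_sum.trans (le_totalDegree hdp)).trans hp
  rw [eval_indicator_eq_sum_powerset]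
  exact sum_eq_zero fun s _ => hc s

lemma Finsupp.eq_zero_or_eq_single_one_of_sum_le_one {d : σ →₀ ℕ}
    (h : (d.sum fun _ e => e) ≤ 1) : d = 0 ∨ ∃ i, d = Finsupp.single i 1 := by
  rcases eq_or_ne d 0 with hd | hd
  · exact Or.inl hd
  obtain ⟨i, hi⟩ := Finsupp.support_nonempty_iff.2 hd
  have : Nonempty σ := ⟨i⟩
  obtain ⟨a, b, rfl⟩ := Finsupp.card_support_le_one'.1 (d.card_support_le_sum.trans h)
  rw [Finsupp.sum_single_index rfl] at h
  have hb : b ≠ 0 := by rintro rfl; simp at hd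
  exact Or.inr ⟨a, by rw [show b = 1 by omega]⟩

lemma eval_add_smul_of_totalDegree_le_one {f : MvPolynomial σ ℝ} (hf : f.totalDegree ≤ 1)
    {a b : ℝ} (hab : a + b = 1) (x y : σ → ℝ) :
    eval (a • x + b • y) f = a * eval x f + b * eval y f := by
  simp only [eval_eq, mul_sum, ← sum_add_distrib]
  refine sum_congr rfl fun d hd => ?_
  rcases Finsupp.eq_zero_or_eq_single_one_of_sum_le_one ((le_totalDegree hd).trans hf)
    with rfl | ⟨i, rfl⟩
  · simp only [Finsupp.support_zero, prod_empty, mul_one]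
    linear_combination (coeff 0 f) * hab.symm
  · simp
    ring

lemma convex_setOf_eval_nonneg {f : MvPolynomial σ ℝ} (hf : f.totalDegree ≤ 1) :
    Convex ℝ {x : σ → ℝ | 0 ≤ eval x f} := by
  intro x hx y hy a b ha hb hab
  simp only [Set.mem_ofPred_eq, eval_add_smul_of_totalDegree_le_one hf hab] at hx hy ⊢
  positivity

end ZeroOnePoints

section ThetaBody

variable {σ : Type*}

lemma eval_nonneg_of_eval_sub_sum_sq_eq_zero {f : MvPolynomial σ ℝ} {t : ℕ}
    {h : Fin t → MvPolynomial σ ℝ} {x : σ → ℝ} (hx : eval x (f - ∑ j, h j ^ 2) = 0) :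
    0 ≤ eval x f := by
  rw [map_sub, sub_eq_zero, map_sum] at hx
  rw [hx]
  exact sum_nonneg fun j _ => by rw [map_pow]; positivity

lemma convexHull_subset_thetaBody (S : Set (σ → ℝ)) (k : ℕ) :
    convexHull ℝ S ⊆ thetaBody (vanishingIdeal ℝ S) k := by
  rintro x hx f hf ⟨t, h, -, hfh⟩
  exact convexHull_min (fun z hz => eval_nonneg_of_eval_sub_sum_sq_eq_zero
    (mem_vanishingIdeal_iff.1 hfh z hz)) (convex_setOf_eval_nonneg hf) hx

lemma isKSos_of_sub_sq_mem {I : Ideal (MvPolynomial σ ℝ)} {k : ℕ} {p : MvPolynomial σ ℝ}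
    (hp : p.totalDegree ≤ k) (hpI : p - p ^ 2 ∈ I) : IsKSos I k p :=
  ⟨1, fun _ => p, fun _ => hp, by simpa using hpI⟩

lemma mem_Icc_of_mem_thetaBody {S : Set (σ → ℝ)}
    (hS : S ⊆ Set.range fun F : Set σ => F.indicator 1) {k : ℕ} (hk : 1 ≤ k) {x : σ → ℝ}
    (hx : x ∈ thetaBody (vanishingIdeal ℝ S) k) (i : σ) : x i ∈ Set.Icc 0 1 := by
  have idem : ∀ z ∈ S, z i - z i ^ 2 = 0 := by
    rintro _ hz
    obtain ⟨F, rfl⟩ := hS hz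
    by_cases hi : i ∈ F <;> simp [hi]
  have hX : (X i : MvPolynomial σ ℝ).totalDegree ≤ 1 := (totalDegree_X i).le
  have hX' : (1 - X i : MvPolynomial σ ℝ).totalDegree ≤ 1 :=
    (totalDegree_sub _ _).trans (max_le (by simp) hX)
  have h0 := hx _ hX <| isKSos_of_sub_sq_mem (hX.trans hk) <|
    mem_vanishingIdeal_iff.2 fun z hz => by simpa using idem z hz
  have h1 := hx _ hX' <| isKSos_of_sub_sq_mem (hX'.trans hk) <|
    mem_vanishingIdeal_iff.2 fun z hz => by
      simp only [map_sub, map_pow, map_one, aeval_X]; linear_combination idem z hz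
  simp only [eval_X, map_sub, map_one] at h0 h1
  exact ⟨h0, by linarith⟩

lemma indicator_mem_thetaBody {S : Set (σ → ℝ)} {k : ℕ} (hk : 1 ≤ k)
    (hS : ∀ F : Finset σ, #F ≤ 2 * k → (↑F : Set σ).indicator 1 ∈ S) (F : Finset σ) :
    (↑F : Set σ).indicator 1 ∈ thetaBody (vanishingIdeal ℝ S) k := by
  classical
  rintro f hf ⟨t, h, hh, hfh⟩
  have hdeg : (f - ∑ j, h j ^ 2).totalDegree ≤ 2 * k := by
    refine (totalDegree_sub _ _).trans (max_le (by omega) ?_)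
    refine (totalDegree_finsetSum _ _).trans (Finset.sup_le fun j _ => ?_)
    exact (totalDegree_pow _ _).trans (by have := hh j; nlinarith)
  exact eval_nonneg_of_eval_sub_sum_sq_eq_zero <| eval_indicator_eq_zero_of_totalDegree_le hdeg
    (fun F hF => mem_vanishingIdeal_iff.1 hfh _ (hS F hF)) F

lemma pi_Icc_subset_convexHull_range_indicator {ι : Type*} [Finite ι] :
    Set.univ.pi (fun _ : ι => Set.Icc (0 : ℝ) 1) ⊆
      convexHull ℝ (Set.range fun F : Set ι => F.indicator 1) := by
  intro x hx
  have hx' : x ∈ convexHull ℝ (Set.univ.pi fun _ : ι => ({0, 1} : Set ℝ)) := by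
    rw [convexHull_pi]
    simpa [convexHull_pair, segment_eq_Icc] using hx
  refine convexHull_mono (fun y hy => ?_) hx'
  refine ⟨{i | y i = 1}, funext fun i => ?_⟩
  rcases hy i trivial with h | h <;> simp_all

lemma indicator_notMem_convexHull {S : Set (σ → ℝ)} {W : Finset σ}
    (hle : ∀ z ∈ S, ∀ i, z i ≤ 1) (hW : ∀ z ∈ S, ∃ i ∈ W, z i ≤ 0) :
    (↑W : Set σ).indicator 1 ∉ convexHull ℝ S := by
  classical
  intro hmem
  have hconv : Convex ℝ {y : σ → ℝ | ∑ i ∈ W, y i ≤ #W - 1} :=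
    convex_halfSpace_le ⟨fun _ _ => sum_add_distrib, fun _ _ => (mul_sum _ _ _).symm⟩ _
  have hS : S ⊆ {y | ∑ i ∈ W, y i ≤ #W - 1} := by
    intro z hz
    obtain ⟨i, hi, hzi⟩ := hW z hz
    calc ∑ j ∈ W, z j = z i + ∑ j ∈ W.erase i, z j := (add_sum_erase _ _ hi).symm
      _ ≤ 0 + ∑ j ∈ W.erase i, 1 := add_le_add hzi (sum_le_sum fun j _ => hle z hz j)
      _ = #W - 1 := by simp [card_erase_of_mem hi, Nat.cast_sub (card_pos.2 ⟨i, hi⟩)]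
  have := convexHull_min hS hconv hmem
  norm_num [Set.indicator_apply] at this

end ThetaBody

section Separation

variable {α : Type*}

lemma Sym2.forall_mk_eq_imp_xor_iff {S : Set α} {a b : α} :
    (∀ c d, s(a, b) = s(c, d) → Xor (c ∈ S) (d ∈ S)) ↔ Xor (a ∈ S) (b ∈ S) := by
  refine ⟨fun h => h a b rfl, fun h c d hcd => ?_⟩
  rcases Sym2.eq_iff.1 hcd with ⟨rfl, rfl⟩ | ⟨rfl, rfl⟩
  exacts [h, xor_comm (a ∈ S) _ ▸ h]

lemma exists_set_xor_mem_xor_mem {a₁ b₁ a₂ b₂ : α} (h₁ : a₁ ≠ b₁) (h₂ : a₂ ≠ b₂) :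
    ∃ S : Set α, Xor (a₁ ∈ S) (b₁ ∈ S) ∧ Xor (a₂ ∈ S) (b₂ ∈ S) := by
  by_cases ha : a₁ = a₂ ∨ a₁ = b₂
  · exact ⟨{a₁}, by aesop⟩
  by_cases hb : b₁ = a₂ ∨ b₁ = b₂
  · exact ⟨{b₁}, by aesop⟩
  exact ⟨{a₁, a₂}, by aesop⟩

end Separation

namespace SimpleGraph

variable {V : Type*} {G : SimpleGraph V}

lemma Walk.even_length_iff_of_forall_xor {S : Set V} {u v : V} (p : G.Walk u v)
    (hp : ∀ a b, s(a, b) ∈ p.edges → Xor (a ∈ S) (b ∈ S)) :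
    Even p.length ↔ (u ∈ S ↔ v ∈ S) := by
  induction p with
  | nil => simp
  | @cons u w v h q ih =>
    rw [length_cons, Nat.even_add_one, ih fun a b hab => hp a b (by simp [hab])]
    have := xor_iff_iff_not.1 (hp u w (by simp))
    tauto

lemma indicator_mem_cutVectors_of_card_le_two (F : Finset G.edgeSet) (hF : #F ≤ 2) :
    (↑F : Set G.edgeSet).indicator 1 ∈ cutVectors G := by
  classical
  suffices ∃ S : Set V, ∀ e ∈ F, ∀ a b, ↑e = s(a, b) → Xor (a ∈ S) (b ∈ S) by
    obtain ⟨S, hS⟩ := this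
    exact ⟨F, S, hS, rfl⟩
  rcases F.eq_empty_or_nonempty with rfl | ⟨e₁, he₁⟩
  · exact ⟨∅, by simp⟩
  have : Nonempty G.edgeSet := ⟨e₁⟩
  obtain ⟨e₂, he₂⟩ := card_le_one_iff_subset_singleton.1 <|
    show #(F.erase e₁) ≤ 1 by rw [card_erase_of_mem he₁]; omega
  have hF₁₂ : ∀ e ∈ F, e = e₁ ∨ e = e₂ := fun e he =>
    (eq_or_ne e e₁).imp_right fun h => mem_singleton.1 (he₂ (mem_erase.2 ⟨h, he⟩))
  clear he₁ he₂ hF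
  rcases e₁ with ⟨⟨a₁, b₁⟩, h₁⟩
  rcases e₂ with ⟨⟨a₂, b₂⟩, h₂⟩
  obtain ⟨S, hS₁, hS₂⟩ := exists_set_xor_mem_xor_mem (G.ne_of_adj h₁) (G.ne_of_adj h₂)
  refine ⟨S, fun e he => ?_⟩
  rcases hF₁₂ e he with rfl | rfl
  exacts [Sym2.forall_mk_eq_imp_xor_iff.2 hS₁, Sym2.forall_mk_eq_imp_xor_iff.2 hS₂]

lemma cutVectors_subset_range_indicator :
    cutVectors G ⊆ Set.range fun F : Set G.edgeSet => F.indicator 1 := by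
  rintro _ ⟨F, -, -, rfl⟩
  exact ⟨F, rfl⟩

lemma range_indicator_subset_cutVectors {A : Set V}
    (hA : ∀ u v : V, G.Adj u v → (u ∈ A ↔ v ∉ A)) :
    (Set.range fun F : Set G.edgeSet => F.indicator 1) ⊆ cutVectors G := by
  rintro _ ⟨F, rfl⟩
  refine ⟨F, A, fun e _ a b hab => xor_iff_iff_not.2 (hA a b ?_), rfl⟩
  rw [← mem_edgeSet, ← hab]
  exact e.2

lemma indicator_notMem_convexHull_cutVectors {u : V} (p : G.Walk u u) (hp : Odd p.length)
    (W : Finset G.edgeSet) (hW : ∀ e : G.edgeSet, ↑e ∈ p.edges → e ∈ W) :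
    (↑W : Set G.edgeSet).indicator 1 ∉ convexHull ℝ (cutVectors G) := by
  refine indicator_notMem_convexHull ?_ ?_
  · rintro _ ⟨F, -, -, rfl⟩ e
    exact Set.indicator_apply_le' (fun _ => le_rfl) (fun _ => zero_le_one)
  · rintro _ ⟨F, S, hS, rfl⟩
    by_contra! hWF
    have hmem : ∀ e ∈ W, e ∈ F := fun e he => by
      by_contra heF
      simpa [heF] using hWF e he
    have hcut : ∀ a b, s(a, b) ∈ p.edges → Xor (a ∈ S) (b ∈ S) := fun a b hab =>
      hS ⟨_, p.edges_subset_edgeSet hab⟩ (hmem _ (hW _ hab)) a b rfl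
    exact Nat.not_even_iff_odd.2 hp ((p.even_length_iff_of_forall_xor hcut).2 Iff.rfl)

lemma exists_bipartition_of_colorable_two (h : G.Colorable 2) :
    ∃ A : Set V, ∀ u v : V, G.Adj u v → (u ∈ A ↔ v ∉ A) := by
  obtain ⟨c⟩ := h
  refine ⟨{v | c v = 0}, fun u v huv => ?_⟩
  have := c.valid huv
  simp only [Set.mem_ofPred_eq]
  omega

end SimpleGraph

open SimpleGraph

theorem stmt_16_general {V : Type*} [Fintype V] (G : SimpleGraph V) :
    thetaBody (vanishingIdeal ℝ (cutVectors G)) 1 = convexHull ℝ (cutVectors G) ↔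
    ∃ A : Set V, ∀ u v : V, G.Adj u v → ((u ∈ A) ↔ v ∉ A) := by
  classical
  constructor
  · intro hTH
    by_contra hA
    obtain ⟨u, p, hp⟩ : ∃ u, ∃ p : G.Walk u u, Odd p.length := by
      simpa [two_colorable_iff_forall_loop_even] using mt exists_bipartition_of_colorable_two hA
    set W := p.edges.toFinset.subtype (· ∈ G.edgeSet)
    have hW : (↑W : Set G.edgeSet).indicator 1 ∈ thetaBody (vanishingIdeal ℝ (cutVectors G)) 1 :=
      indicator_mem_thetaBody le_rfl indicator_mem_cutVectors_of_card_le_two W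
    exact indicator_notMem_convexHull_cutVectors p hp W (by simp [W]) (hTH ▸ hW)
  · rintro ⟨A, hA⟩
    refine (convexHull_subset_thetaBody _ 1).antisymm' fun x hx => ?_
    refine convexHull_mono (range_indicator_subset_cutVectors hA) <|
      pi_Icc_subset_convexHull_range_indicator fun e _ => ?_
    exact mem_Icc_of_mem_thetaBody cutVectors_subset_range_indicator le_rfl hx e

/-- Let G = (V,E) be a finite simple graph with at least one edge, and SG
the set of 0/1 incidence vectors in ℝ^E of edge subsets contained in a cut of G. Then
I(SG) is TH_1-exact, i.e. TH_1(I(SG)) = conv(SG), if and only if G is bipartite. -/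
theorem stmt_16 {V : Type*} [Fintype V] (G : SimpleGraph V) (hE : G.edgeSet.Nonempty) :
    thetaBody (vanishingIdeal ℝ (cutVectors G)) 1 = convexHull ℝ (cutVectors G) ↔
    ∃ A : Set V, ∀ u v : V, G.Adj u v → ((u ∈ A) ↔ v ∉ A) :=
  stmt_16_general G
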